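/- arXiv:0911.1117 — 2 statements merged into one kernel-verified Lean document; each statement's English description precedes it below -/
import Mathlib

section
/- Let X = (X_n)_{n∈ℤ^d} be a weakly stationary centered random field whose covariance function satisfies |r^X(k)| ≤ ρ(k) for all k, with Σ_{k∈ℤ^d} ρ(k) < ∞. Let p_N, q_N be positive integers, k_N = ⌊(2N+1)/(p_N+q_N)⌋, and let Δ_N ⊆ [−N,N]^d be the union of the k_N^d Bernshtein cubes of side p_N+1 built from p_N, q_N. Then for any A ⊆ ℤ^d, E[S_N(A ∩ Δ_N^c, X)²] ≤ C·((2N+1)^d − k_N^d (p_N+1)^d)/(2N+1)^d, where C = Σ_{k∈ℤ^d} ρ(k) and Δ_N^c is the complement of Δ_N in ℤ^d. -/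
open MeasureTheory ProbabilityTheory Filter
open scoped ENNReal NNReal

noncomputable section

/-- The discrete cube `[-N,N]^d ⊆ ℤ^d` as a finset. -/
def intCube (d N : ℕ) : Finset (Fin d → ℤ) :=
  Fintype.piFinset fun _ => Finset.Icc (-(N : ℤ)) (N : ℤ)

open Classical in
/-- `A_N = A ∩ [-N,N]^d` as a finset. -/
def restr (d : ℕ) (A : Set (Fin d → ℤ)) (N : ℕ) : Finset (Fin d → ℤ) :=
  (intCube d N).filter fun n => n ∈ A

/-- The normalized partial sum `S_N(A,X) = (2N+1)^{-d/2} ∑_{n ∈ A_N} X_n`. -/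
def SN {Ω : Type*} (d N : ℕ) (A : Set (Fin d → ℤ)) (X : (Fin d → ℤ) → Ω → ℝ)
    (ω : Ω) : ℝ :=
  (Real.sqrt ((2 * N + 1) ^ d))⁻¹ * ∑ n ∈ restr d A N, X n ω

/-- `H_N(k;A) = card(A_N ∩ (k + A_N)) / (2N+1)^d`. -/
def HN (d : ℕ) (A : Set (Fin d → ℤ)) (N : ℕ) (k : Fin d → ℤ) : ℝ :=
  ((restr d A N ∩ (restr d A N).image (k + ·)).card : ℝ) / (2 * N + 1 : ℝ) ^ d

/-- The sup-norm `‖k‖ = max_i |k_i|` on `ℤ^d`, as a natural number. -/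
def supNormZ {d : ℕ} (k : Fin d → ℤ) : ℕ :=
  Finset.univ.sup fun i => (k i).natAbs

/-- `dist(A,B) ≥ r` in the sup-norm. -/
def setDistGe {d : ℕ} (A B : Set (Fin d → ℤ)) (r : ℝ) : Prop :=
  ∀ a ∈ A, ∀ b ∈ B, r ≤ (supNormZ (a - b) : ℝ)

/-- `A` is asymptotically measurable with limit function `Hlim`. -/
def IsAM (d : ℕ) (A : Set (Fin d → ℤ)) (Hlim : (Fin d → ℤ) → ℝ) : Prop :=
  ∀ k, Tendsto (fun N => HN d A N k) atTop (nhds (Hlim k)) ∧ 0 < Hlim k ∧ Hlim k < 1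

/-- The truncation of the field `X` at level `J`:
`X^J_n = X_n·1_{|X_n|≤J} − E[X_n·1_{|X_n|≤J}]`. -/
def truncF {Ω : Type*} [MeasureSpace Ω] {d : ℕ} (X : (Fin d → ℤ) → Ω → ℝ) (J : ℝ)
    (n : Fin d → ℤ) (ω : Ω) : ℝ :=
  (if |X n ω| ≤ J then X n ω else 0) - ∫ ω', if |X n ω'| ≤ J then X n ω' else 0

/-- The covariance function `r^X(k) = E[X_0 X_k]`. -/
def covF {Ω : Type*} [MeasureSpace Ω] {d : ℕ} (X : (Fin d → ℤ) → Ω → ℝ)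
    (k : Fin d → ℤ) : ℝ :=
  ∫ ω, X 0 ω * X k ω

/-- Strict stationarity of a random field: for every `k` the shifted family has the
same joint distribution as the original one. -/
def StrictStat {Ω : Type*} [MeasureSpace Ω] {d : ℕ} (X : (Fin d → ℤ) → Ω → ℝ) : Prop :=
  ∀ k : Fin d → ℤ,
    Measure.map (fun ω (n : Fin d → ℤ) => X (n + k) ω) (ℙ : Measure Ω)
      = Measure.map (fun ω (n : Fin d → ℤ) => X n ω) (ℙ : Measure Ω)

/-- `m`-dependence: families indexed by finite sets at sup-norm distance `> m`
are independent. -/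
def MDep {Ω : Type*} [MeasureSpace Ω] {d : ℕ} (m : ℕ) (X : (Fin d → ℤ) → Ω → ℝ) : Prop :=
  ∀ S T : Finset (Fin d → ℤ),
    (∀ s ∈ S, ∀ t ∈ T, (m : ℝ) < (supNormZ (s - t) : ℝ)) →
      IndepFun (fun ω (s : S) => X s.1 ω) (fun ω (t : T) => X t.1 ω) ℙ

/-- Convergence in distribution to a centered Gaussian with variance `v`. -/
def WeakToGaussian {Ω : Type*} [MeasureSpace Ω] (Y : ℕ → Ω → ℝ) (v : ℝ≥0) : Prop :=
  ∀ f : BoundedContinuousFunction ℝ ℝ,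
    Tendsto (fun N => ∫ ω, f (Y N ω)) atTop (nhds (∫ x, f x ∂gaussianReal 0 v))

end

/-!
Write `B = A_N ∖ Δ_N`. Expanding the square and using weak stationarity,
`E[(∑_{n ∈ B} X_n)²] = ∑_{m,n ∈ B} r^X(n - m)`, and each row of this double sum is at most
`∑_k ρ(k)` after shifting the index, so the second moment is at most `#B · ∑_k ρ(k)`.
The Bernshtein cubes lie in `[-N,N]^d` because `k_N (p_N + q_N) ≤ 2N + 1`, and they are
pairwise disjoint because `q_N ≥ 1` leaves a gap between consecutive ones; hence
`#B ≤ (2N+1)^d - k_N^d (p_N+1)^d`.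
-/

open Finset

section SecondMoment

variable {Ω G : Type*} [MeasurableSpace Ω] {μ : Measure Ω} [AddGroup G]

theorem integral_sq_finsetSum_eq_sum_sum {X : G → Ω → ℝ} (hX : ∀ n, MemLp (X n) 2 μ)
    {r : G → ℝ} (hr : ∀ n k, ∫ ω, X n ω * X (n + k) ω ∂μ = r k) (B : Finset G) :
    ∫ ω, (∑ n ∈ B, X n ω) ^ 2 ∂μ = ∑ m ∈ B, ∑ n ∈ B, r (-m + n) := by
  have hint (m n : G) : Integrable (fun ω => X m ω * X n ω) μ := (hX m).integrable_mul (hX n)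
  simp_rw [sq, sum_mul_sum]
  rw [integral_finsetSum _ fun m _ => integrable_finsetSum _ fun n _ => hint m n]
  refine sum_congr rfl fun m _ => ?_
  rw [integral_finsetSum _ fun n _ => hint m n]
  refine sum_congr rfl fun n _ => ?_
  simpa using hr m (-m + n)

theorem sum_sum_le_card_mul_tsum {r ρ : G → ℝ} (hr : ∀ k, |r k| ≤ ρ k) (hρ : Summable ρ)
    (B : Finset G) : ∑ m ∈ B, ∑ n ∈ B, r (-m + n) ≤ #B * ∑' k, ρ k := by
  have hρ_nonneg (k : G) : 0 ≤ ρ k := (abs_nonneg _).trans (hr k)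
  have hrow (m : G) : ∑ n ∈ B, r (-m + n) ≤ ∑' k, ρ k :=
    calc ∑ n ∈ B, r (-m + n) ≤ ∑ n ∈ B, ρ (-m + n) :=
          sum_le_sum fun n _ => (le_abs_self _).trans (hr _)
      _ ≤ ∑' n, ρ (-m + n) :=
          ((Equiv.addLeft (-m)).summable_iff.mpr hρ).sum_le_tsum _ fun n _ => hρ_nonneg _
      _ = ∑' k, ρ k := (Equiv.addLeft (-m)).tsum_eq ρ
  simpa using sum_le_sum fun m (_ : m ∈ B) => hrow m

theorem integral_sq_finsetSum_le {X : G → Ω → ℝ} (hX : ∀ n, MemLp (X n) 2 μ)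
    {r ρ : G → ℝ} (hstat : ∀ n k, ∫ ω, X n ω * X (n + k) ω ∂μ = r k)
    (hr : ∀ k, |r k| ≤ ρ k) (hρ : Summable ρ) (B : Finset G) :
    ∫ ω, (∑ n ∈ B, X n ω) ^ 2 ∂μ ≤ #B * ∑' k, ρ k := by
  rw [integral_sq_finsetSum_eq_sum_sum hX hstat]
  exact sum_sum_le_card_mul_tsum hr hρ B

end SecondMoment

section BernshteinBlocks

variable {d : ℕ}

noncomputable def bernshteinCube (N p q : ℕ) (j : Fin d → ℕ) : Finset (Fin d → ℤ) :=
  Fintype.piFinset fun i =>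
    Icc (-(N : ℤ) + (j i : ℤ) * ((p : ℤ) + q)) (-(N : ℤ) + (j i : ℤ) * ((p : ℤ) + q) + p)

/-- `Δ_N` for `k = k_N`. -/
noncomputable def bernshteinBlocks (d N p q k : ℕ) : Finset (Fin d → ℤ) :=
  (Fintype.piFinset fun _ : Fin d => range k).biUnion (bernshteinCube N p q)

theorem card_intCube (N : ℕ) : #(intCube d N) = (2 * N + 1) ^ d := by
  have hside : #(Icc (-(N : ℤ)) N) = 2 * N + 1 := by rw [Int.card_Icc]; omega
  simp [intCube, hside]

theorem card_bernshteinCube (N p q : ℕ) (j : Fin d → ℕ) :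
    #(bernshteinCube N p q j) = (p + 1) ^ d := by
  have hside (a : ℤ) : #(Icc a (a + p)) = p + 1 := by rw [Int.card_Icc]; omega
  simp [bernshteinCube, hside]

theorem disjoint_bernshteinCube {N p q : ℕ} (hq : 0 < q) {j j' : Fin d → ℕ} (h : j ≠ j') :
    Disjoint (bernshteinCube N p q j) (bernshteinCube N p q j') := by
  obtain ⟨i, hi⟩ := Function.ne_iff.mp h
  refine Fintype.piFinset_disjoint_of_disjoint _ _ (a := i) ?_
  rw [disjoint_left]
  intro x hx hx'
  simp only [mem_Icc] at hx hx'
  rcases Nat.lt_or_gt_of_ne hi with hlt | hlt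
  · have : ((j i : ℤ) + 1) * (p + q) ≤ j' i * (p + q) := by gcongr; omega
    nlinarith
  · have : ((j' i : ℤ) + 1) * (p + q) ≤ j i * (p + q) := by gcongr; omega
    nlinarith

theorem bernshteinCube_subset_intCube {N p q : ℕ} (hq : 0 < q) {j : Fin d → ℕ}
    (hj : ∀ i, (j i + 1) * (p + q) ≤ 2 * N + 1) : bernshteinCube N p q j ⊆ intCube d N := by
  intro x hx
  simp only [bernshteinCube, intCube, Fintype.mem_piFinset, mem_Icc] at hx ⊢
  intro i
  have hji : ((j i : ℤ) + 1) * (p + q) ≤ 2 * N + 1 := by exact_mod_cast hj i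
  have := hx i
  constructor <;> nlinarith

theorem card_bernshteinBlocks (N p : ℕ) {q : ℕ} (hq : 0 < q) (k : ℕ) :
    #(bernshteinBlocks d N p q k) = k ^ d * (p + 1) ^ d := by
  rw [bernshteinBlocks, card_biUnion fun j _ j' _ h => disjoint_bernshteinCube hq h]
  simp [card_bernshteinCube]

theorem bernshteinBlocks_subset_intCube {N p q k : ℕ} (hq : 0 < q)
    (hk : k * (p + q) ≤ 2 * N + 1) : bernshteinBlocks d N p q k ⊆ intCube d N := by
  refine biUnion_subset.mpr fun j hj => bernshteinCube_subset_intCube hq fun i => ?_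
  have : j i < k := by simpa using Fintype.mem_piFinset.mp hj i
  exact le_trans (Nat.mul_le_mul_right _ this) hk

end BernshteinBlocks

theorem card_restr_inter_compl_add_card_le {d N : ℕ} {Δ : Finset (Fin d → ℤ)}
    (hΔ : Δ ⊆ intCube d N) (A : Set (Fin d → ℤ)) :
    #(restr d (A ∩ (↑Δ)ᶜ) N) + #Δ ≤ (2 * N + 1) ^ d := by
  have hsub : restr d (A ∩ (↑Δ)ᶜ) N ⊆ intCube d N \ Δ := by
    intro n hn
    simp only [restr, mem_filter, Set.mem_inter_iff, Set.mem_compl_iff, mem_coe] at hn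
    exact mem_sdiff.mpr ⟨hn.1, hn.2.2⟩
  rw [← card_intCube N, ← card_sdiff_add_card_eq_card hΔ]
  gcongr

theorem SN_sq {Ω : Type*} (d N : ℕ) (A : Set (Fin d → ℤ)) (X : (Fin d → ℤ) → Ω → ℝ) (ω : Ω) :
    SN d N A X ω ^ 2 = (∑ n ∈ restr d A N, X n ω) ^ 2 / (2 * N + 1 : ℝ) ^ d := by
  rw [SN, mul_pow, inv_pow, Real.sq_sqrt (by positivity), inv_mul_eq_div]

theorem small_blocks_L2_bound_general
    {Ω : Type*} [MeasureSpace Ω]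
    {d : ℕ} (X : (Fin d → ℤ) → Ω → ℝ)
    (hL2 : ∀ n, MemLp (X n) 2 ℙ)
    (hstat : ∀ n k : Fin d → ℤ, ∫ ω, X n ω * X (n + k) ω = covF X k)
    (ρ : (Fin d → ℤ) → ℝ) (hρ : ∀ k, |covF X k| ≤ ρ k) (hρsum : Summable ρ)
    (p q N : ℕ) (hq : 0 < q)
    (kN : ℕ) (hkN : kN = (2 * N + 1) / (p + q))
    (Δ : Finset (Fin d → ℤ))
    (hΔ : Δ = (Fintype.piFinset fun _ : Fin d => Finset.range kN).biUnion fun j =>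
      Fintype.piFinset fun i =>
        Finset.Icc (-(N : ℤ) + (j i : ℤ) * ((p : ℤ) + q))
          (-(N : ℤ) + (j i : ℤ) * ((p : ℤ) + q) + p))
    (A : Set (Fin d → ℤ)) :
    ∫ ω, (SN d N (A ∩ (↑Δ)ᶜ) X ω) ^ 2
      ≤ (∑' k : Fin d → ℤ, ρ k)
        * (((2 * N + 1 : ℝ) ^ d - (kN : ℝ) ^ d * ((p : ℝ) + 1) ^ d)
            / (2 * N + 1 : ℝ) ^ d) := by
  replace hΔ : Δ = bernshteinBlocks d N p q kN := hΔ
  have hΔ_sub : Δ ⊆ intCube d N :=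
    hΔ ▸ bernshteinBlocks_subset_intCube hq (hkN ▸ Nat.div_mul_le_self _ _)
  have hcard : (#(restr d (A ∩ (↑Δ)ᶜ) N) : ℝ) + kN ^ d * (p + 1) ^ d ≤ (2 * N + 1) ^ d := by
    have hΔ_card : #Δ = kN ^ d * (p + 1) ^ d := hΔ ▸ card_bernshteinBlocks N p hq kN
    exact_mod_cast hΔ_card ▸ card_restr_inter_compl_add_card_le hΔ_sub A
  have hC : 0 ≤ ∑' k, ρ k := tsum_nonneg fun k => (abs_nonneg _).trans (hρ k)
  simp_rw [SN_sq]
  rw [integral_div, ← mul_div_assoc]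
  gcongr
  calc ∫ ω, (∑ n ∈ restr d (A ∩ (↑Δ)ᶜ) N, X n ω) ^ 2
      ≤ #(restr d (A ∩ (↑Δ)ᶜ) N) * ∑' k, ρ k := integral_sq_finsetSum_le hL2 hstat hρ hρsum _
    _ ≤ _ := by rw [mul_comm]; gcongr; linarith

/-- **The small-blocks remainder is negligible in `L²`.** -/
theorem small_blocks_L2_bound
    {Ω : Type*} [MeasureSpace Ω] [IsProbabilityMeasure (ℙ : Measure Ω)]
    {d : ℕ} (X : (Fin d → ℤ) → Ω → ℝ)
    (hmeas : ∀ n, Measurable (X n))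
    (hcent : ∀ n, ∫ ω, X n ω = 0)
    (hL2 : ∀ n, MemLp (X n) 2 ℙ)
    (hstat : ∀ n k : Fin d → ℤ, ∫ ω, X n ω * X (n + k) ω = covF X k)
    (ρ : (Fin d → ℤ) → ℝ) (hρ : ∀ k, |covF X k| ≤ ρ k) (hρsum : Summable ρ)
    (p q N : ℕ) (hp : 0 < p) (hq : 0 < q)
    (kN : ℕ) (hkN : kN = (2 * N + 1) / (p + q))
    (Δ : Finset (Fin d → ℤ))
    (hΔ : Δ = (Fintype.piFinset fun _ : Fin d => Finset.range kN).biUnion fun j =>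
      Fintype.piFinset fun i =>
        Finset.Icc (-(N : ℤ) + (j i : ℤ) * ((p : ℤ) + q))
          (-(N : ℤ) + (j i : ℤ) * ((p : ℤ) + q) + p))
    (A : Set (Fin d → ℤ)) :
    ∫ ω, (SN d N (A ∩ (↑Δ)ᶜ) X ω) ^ 2
      ≤ (∑' k : Fin d → ℤ, ρ k)
        * (((2 * N + 1 : ℝ) ^ d - (kN : ℝ) ^ d * ((p : ℝ) + 1) ^ d)
            / (2 * N + 1 : ℝ) ^ d) :=
  small_blocks_L2_bound_general X hL2 hstat ρ hρ hρsum p q N hq kN hkN Δ hΔ A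
end

section
/- Let X = (X_n)_{n∈ℤ^d} be a strictly stationary, centered, m-dependent random field with E[X_0²] < ∞, and for J > 0 set Y^J_n = X_n − X^J_n, where X^J is the truncation of X at level J. Then for every B ⊆ ℤ^d and N ∈ ℕ, E[(S_N(B,X) − S_N(B,X^J))²] ≤ b(J)·card(B_N)/(2N+1)^d, where b(J) = Σ_{k∈ℤ^d, ‖k‖≤m} |E[Y^J_0 Y^J_k]|, and b(J) → 0 as J → ∞. -/
open MeasureTheory ProbabilityTheory Filter
open scoped ENNReal NNReal

/-! For a centered field, `X_n - X^J_n = U_n - E[U_n]` with `U_n = X_n 1_{|X_n| > J}`; by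
stationarity `E[U_n]` does not depend on `n`, so `Y^J_n = X_n - X^J_n = φ_J(X_n)` for a single
measurable `φ_J`, and `Y^J` inherits stationarity and `m`-dependence from `X`, with `E[Y^J_n] = 0`.
Expanding the square, `E[(∑_{n ∈ B_N} Y^J_n)^2] = ∑_{n, n' ∈ B_N} r(n' - n)` with
`r(k) = E[Y^J_0 Y^J_k]`, which vanishes for `‖k‖ > m`; so every row sum is at most `b(J)`.
Moreover `|r(k)| ≤ E[(Y^J_0)^2] = Var(U_0) ≤ E[X_0^2 1_{|X_0| > J}]`, which tends to `0` by
dominated convergence. -/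

open Finset

section SupNorm

theorem mem_intCube_iff_supNormZ_le {d N : ℕ} {k : Fin d → ℤ} :
    k ∈ intCube d N ↔ supNormZ k ≤ N := by
  simp only [intCube, supNormZ, Fintype.mem_piFinset, Finset.mem_Icc, Finset.sup_le_iff,
    Finset.mem_univ, true_implies]
  exact forall_congr' fun i => by omega

theorem sum_sub_le_sum_abs_intCube {d m : ℕ} {r : (Fin d → ℤ) → ℝ}
    (hr : ∀ k, m < supNormZ k → r k = 0) (s : Finset (Fin d → ℤ)) (n : Fin d → ℤ) :
    ∑ n' ∈ s, r (n' - n) ≤ ∑ k ∈ intCube d m, |r k| := by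
  classical
  calc ∑ n' ∈ s, r (n' - n)
      = ∑ k ∈ s.image (· - n), r k :=
        (sum_image fun _ _ _ _ h => sub_left_injective h).symm
    _ = ∑ k ∈ (s.image (· - n)).filter (· ∈ intCube d m), r k := by
        refine (sum_filter_of_ne fun k _ hk => ?_).symm
        by_contra hout
        exact hk (hr k (not_le.mp (mt mem_intCube_iff_supNormZ_le.mpr hout)))
    _ ≤ ∑ k ∈ (s.image (· - n)).filter (· ∈ intCube d m), |r k| :=
        sum_le_sum fun _ _ => le_abs_self _
    _ ≤ ∑ k ∈ intCube d m, |r k| :=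
        sum_le_sum_of_subset_of_nonneg (fun _ hk => (mem_filter.mp hk).2)
          fun _ _ _ => abs_nonneg _

end SupNorm

section SecondMoments

variable {Ω ι : Type*} {mΩ : MeasurableSpace Ω} {μ : Measure Ω}

theorem integral_sq_sum_eq {Y : ι → Ω → ℝ} (hY : ∀ n, MemLp (Y n) 2 μ) (s : Finset ι) :
    ∫ ω, (∑ n ∈ s, Y n ω) ^ 2 ∂μ = ∑ n ∈ s, ∑ n' ∈ s, ∫ ω, Y n ω * Y n' ω ∂μ := by
  have hint : ∀ n n', Integrable (fun ω => Y n ω * Y n' ω) μ :=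
    fun n n' => (hY n).integrable_mul (hY n')
  simp_rw [sq, sum_mul_sum]
  rw [integral_finsetSum s fun n _ => integrable_finsetSum s fun n' _ => hint n n']
  exact sum_congr rfl fun n _ => integral_finsetSum s fun n' _ => hint n n'

theorem integral_sq_sum_le_of_covariance {d m : ℕ} {Y : (Fin d → ℤ) → Ω → ℝ}
    (hY : ∀ n, MemLp (Y n) 2 μ) {r : (Fin d → ℤ) → ℝ}
    (hcov : ∀ a b, ∫ ω, Y a ω * Y b ω ∂μ = r (b - a)) (hr : ∀ k, m < supNormZ k → r k = 0)
    (s : Finset (Fin d → ℤ)) :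
    ∫ ω, (∑ n ∈ s, Y n ω) ^ 2 ∂μ ≤ #s * ∑ k ∈ intCube d m, |r k| := by
  rw [integral_sq_sum_eq hY, ← nsmul_eq_mul, ← sum_const]
  refine sum_le_sum fun n _ => ?_
  simp only [hcov]
  exact sum_sub_le_sum_abs_intCube hr s n

theorem abs_integral_mul_le_half_add {f g : Ω → ℝ} (hf : MemLp f 2 μ) (hg : MemLp g 2 μ) :
    |∫ ω, f ω * g ω ∂μ| ≤ ((∫ ω, f ω ^ 2 ∂μ) + ∫ ω, g ω ^ 2 ∂μ) / 2 := by
  rw [← integral_add hf.integrable_sq hg.integrable_sq, ← integral_div]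
  refine (abs_integral_le_integral_abs).trans (integral_mono (hf.integrable_mul hg).abs
    ((hf.integrable_sq.add hg.integrable_sq).div_const 2) fun ω => ?_)
  have := two_mul_le_add_sq |f ω| |g ω|
  rw [sq_abs, sq_abs] at this
  simp only [abs_mul]
  linarith

end SecondMoments

section Tail

noncomputable def tailPart (J t : ℝ) : ℝ := if |t| ≤ J then 0 else t

theorem measurable_tailPart (J : ℝ) : Measurable (tailPart J) :=
  Measurable.ite (measurableSet_le measurable_id.abs measurable_const) measurable_const
    measurable_id

theorem abs_tailPart_le (J t : ℝ) : |tailPart J t| ≤ |t| := by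
  unfold tailPart; split_ifs <;> simp

theorem ite_abs_le_eq_sub_tailPart (J t : ℝ) : (if |t| ≤ J then t else 0) = t - tailPart J t := by
  unfold tailPart; split_ifs <;> simp

theorem MeasureTheory.MemLp.tailPart {Ω : Type*} {mΩ : MeasurableSpace Ω} {μ : Measure Ω}
    {p : ℝ≥0∞} {f : Ω → ℝ} (hf : MemLp f p μ) (J : ℝ) :
    MemLp (fun ω => tailPart J (f ω)) p μ :=
  hf.of_le ((measurable_tailPart J).comp_aemeasurable hf.aemeasurable).aestronglyMeasurable
    (.of_forall fun ω => by simpa only [Real.norm_eq_abs] using abs_tailPart_le J (f ω))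

theorem tendsto_integral_tailPart_sq {Ω : Type*} {mΩ : MeasurableSpace Ω} {μ : Measure Ω}
    {f : Ω → ℝ} (hf : MemLp f 2 μ) :
    Tendsto (fun J => ∫ ω, tailPart J (f ω) ^ 2 ∂μ) atTop (nhds 0) := by
  have hlim : ∀ ω, Tendsto (fun J => tailPart J (f ω) ^ 2) atTop (nhds 0) := fun ω =>
    tendsto_const_nhds.congr' <| (eventually_ge_atTop |f ω|).mono fun J hJ => by
      simp [tailPart, hJ]
  simpa using tendsto_integral_filter_of_dominated_convergence
    (F := fun J ω => tailPart J (f ω) ^ 2) (fun ω => f ω ^ 2)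
    (.of_forall fun J => (hf.tailPart J).aestronglyMeasurable.pow 2)
    (.of_forall fun J => .of_forall fun ω => by
      simpa only [norm_pow, Real.norm_eq_abs, sq_abs] using
        pow_le_pow_left₀ (abs_nonneg _) (abs_tailPart_le J (f ω)) 2)
    hf.integrable_sq (.of_forall hlim)

end Tail

section RandomField

variable {Ω : Type*} [MeasureSpace Ω] {d : ℕ} {X : (Fin d → ℤ) → Ω → ℝ}

namespace StrictStat

theorem integral_comp_shift (hX : StrictStat X) (hXm : ∀ n, AEMeasurable (X n))
    {ψ : ((Fin d → ℤ) → ℝ) → ℝ} (hψ : Measurable ψ) (k : Fin d → ℤ) :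
    ∫ ω, ψ (fun n => X (n + k) ω) = ∫ ω, ψ (fun n => X n ω) := by
  rw [← integral_map (aemeasurable_pi_lambda _ fun n => hXm (n + k)) hψ.aestronglyMeasurable,
    hX k, integral_map (aemeasurable_pi_lambda _ hXm) hψ.aestronglyMeasurable]

theorem integral_comp_eq (hX : StrictStat X) (hXm : ∀ n, AEMeasurable (X n)) {φ : ℝ → ℝ}
    (hφ : Measurable φ) (n : Fin d → ℤ) :
    ∫ ω, φ (X n ω) = ∫ ω, φ (X 0 ω) := by
  simpa using hX.integral_comp_shift hXm (hφ.comp (measurable_pi_apply 0)) n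

theorem integral_comp_mul_comp_eq (hX : StrictStat X) (hXm : ∀ n, AEMeasurable (X n))
    {φ : ℝ → ℝ} (hφ : Measurable φ) (a b : Fin d → ℤ) :
    ∫ ω, φ (X a ω) * φ (X b ω) = ∫ ω, φ (X 0 ω) * φ (X (b - a) ω) := by
  simpa using hX.integral_comp_shift hXm
    ((hφ.comp (measurable_pi_apply 0)).mul (hφ.comp (measurable_pi_apply (b - a)))) a

theorem abs_integral_comp_mul_comp_le (hX : StrictStat X)
    (hXm : ∀ n, AEMeasurable (X n)) {φ : ℝ → ℝ} (hφ : Measurable φ)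
    (hφX : ∀ n, MemLp (fun ω => φ (X n ω)) 2) (k : Fin d → ℤ) :
    |∫ ω, φ (X 0 ω) * φ (X k ω)| ≤ ∫ ω, φ (X 0 ω) ^ 2 := by
  have hsq := hX.integral_comp_eq hXm (hφ.pow_const 2) k
  refine (abs_integral_mul_le_half_add (hφX 0) (hφX k)).trans_eq ?_
  rw [hsq]
  ring

end StrictStat

theorem MDep.indepFun {m : ℕ} (hX : MDep m X) {a b : Fin d → ℤ} (hab : m < supNormZ (a - b)) :
    IndepFun (X a) (X b) ℙ := by
  have hsingle := hX {a} {b} fun s hs t ht => by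
    rw [mem_singleton.mp hs, mem_singleton.mp ht]
    exact_mod_cast hab
  exact hsingle.comp (measurable_pi_apply ⟨a, mem_singleton_self a⟩)
    (measurable_pi_apply ⟨b, mem_singleton_self b⟩)

theorem MDep.integral_comp_mul_comp_eq_zero {m : ℕ} (hX : MDep m X)
    (hXm : ∀ n, AEMeasurable (X n)) {φ : ℝ → ℝ} (hφ : Measurable φ)
    (hφ0 : ∀ n, ∫ ω, φ (X n ω) = 0) {a b : Fin d → ℤ} (hab : m < supNormZ (a - b)) :
    ∫ ω, φ (X a ω) * φ (X b ω) = 0 := by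
  simpa [hφ0] using ((hX.indepFun hab).comp hφ hφ).integral_fun_mul_eq_mul_integral
    (hφ.comp_aemeasurable (hXm a)).aestronglyMeasurable
    (hφ.comp_aemeasurable (hXm b)).aestronglyMeasurable

theorem sub_truncF_eq_tailPart_sub_integral {n : Fin d → ℤ} (hXn : Integrable (X n))
    (hcent : ∫ ω, X n ω = 0) (J : ℝ) (ω : Ω) :
    X n ω - truncF X J n ω = tailPart J (X n ω) - ∫ ω', tailPart J (X n ω') := by
  have htail : Integrable (fun ω => tailPart J (X n ω)) :=
    hXn.mono ((measurable_tailPart J).comp_aemeasurable hXn.aemeasurable).aestronglyMeasurable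
      (.of_forall fun ω => by simpa only [Real.norm_eq_abs] using abs_tailPart_le J (X n ω))
  simp only [truncF, ite_abs_le_eq_sub_tailPart]
  rw [integral_sub hXn htail, hcent]
  ring

noncomputable def centeredTail (X : (Fin d → ℤ) → Ω → ℝ) (J t : ℝ) : ℝ :=
  tailPart J t - ∫ ω, tailPart J (X 0 ω)

theorem measurable_centeredTail (J : ℝ) : Measurable (centeredTail X J) :=
  (measurable_tailPart J).sub_const _

theorem memLp_centeredTail {p : ℝ≥0∞} [IsFiniteMeasure (ℙ : Measure Ω)] {n : Fin d → ℤ}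
    (hXn : MemLp (X n) p) (J : ℝ) :
    MemLp (fun ω => centeredTail X J (X n ω)) p :=
  (hXn.tailPart J).sub (memLp_const _)

theorem StrictStat.sub_truncF_eq_centeredTail (hX : StrictStat X)
    (hXi : ∀ n, Integrable (X n)) (hcent : ∀ n, ∫ ω, X n ω = 0) (J : ℝ) (n : Fin d → ℤ)
    (ω : Ω) : X n ω - truncF X J n ω = centeredTail X J (X n ω) := by
  rw [sub_truncF_eq_tailPart_sub_integral (hXi n) (hcent n),
    hX.integral_comp_eq (fun n => (hXi n).aemeasurable) (measurable_tailPart J), centeredTail]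

theorem StrictStat.integral_centeredTail [IsProbabilityMeasure (ℙ : Measure Ω)]
    (hX : StrictStat X) (hXi : ∀ n, Integrable (X n)) (J : ℝ) (n : Fin d → ℤ) :
    ∫ ω, centeredTail X J (X n ω) = 0 := by
  rw [hX.integral_comp_eq (fun n => (hXi n).aemeasurable) (measurable_centeredTail J)]
  unfold centeredTail
  rw [integral_sub (((memLp_one_iff_integrable.mpr (hXi 0)).tailPart J).integrable le_rfl)
    (integrable_const _)]
  simp

theorem integral_centeredTail_sq_le [IsProbabilityMeasure (ℙ : Measure Ω)]
    (hX0 : AEMeasurable (X 0)) (J : ℝ) :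
    ∫ ω, centeredTail X J (X 0 ω) ^ 2 ≤ ∫ ω, tailPart J (X 0 ω) ^ 2 :=
  (variance_eq_integral ((measurable_tailPart J).comp_aemeasurable hX0)).symm.trans_le
    (variance_le_expectation_sq
      ((measurable_tailPart J).comp_aemeasurable hX0).aestronglyMeasurable)

end RandomField

theorem SN_sub_sq {Ω : Type*} (d N : ℕ) (A : Set (Fin d → ℤ)) (X X' : (Fin d → ℤ) → Ω → ℝ)
    (ω : Ω) :
    (SN d N A X ω - SN d N A X' ω) ^ 2
      = (∑ n ∈ restr d A N, (X n ω - X' n ω)) ^ 2 / (2 * N + 1 : ℝ) ^ d := by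
  rw [SN, SN, ← mul_sub, ← sum_sub_distrib, mul_pow, inv_pow, Real.sq_sqrt (by positivity),
    inv_mul_eq_div]

theorem mdep_truncation_L2_bound_general
    {Ω : Type*} [MeasureSpace Ω] [IsProbabilityMeasure (ℙ : Measure Ω)]
    {d : ℕ} (m : ℕ) (X : (Fin d → ℤ) → Ω → ℝ)
    (hstat : StrictStat X)
    (hcent : ∀ n, ∫ ω, X n ω = 0)
    (hL2 : ∀ n, MemLp (X n) 2 ℙ)
    (hmdep : MDep m X)
    (b : ℝ → ℝ)
    (hbdef : ∀ J : ℝ, b J = ∑ k ∈ intCube d m,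
      |∫ ω, (X 0 ω - truncF X J 0 ω) * (X k ω - truncF X J k ω)|) :
    (∀ (B : Set (Fin d → ℤ)) (N : ℕ) (J : ℝ), 0 < J →
      ∫ ω, (SN d N B X ω - SN d N B (truncF X J) ω) ^ 2
        ≤ b J * (restr d B N).card / (2 * N + 1 : ℝ) ^ d) ∧
    Tendsto b atTop (nhds 0) := by
  have hXm : ∀ n, AEMeasurable (X n) := fun n => (hL2 n).aemeasurable
  have hXi : ∀ n, Integrable (X n) := fun n => (hL2 n).integrable one_le_two
  have hY := hstat.sub_truncF_eq_centeredTail hXi hcent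
  have hb : ∀ J, b J = ∑ k ∈ intCube d m,
      |∫ ω, centeredTail X J (X 0 ω) * centeredTail X J (X k ω)| := by
    simp only [hbdef, hY, implies_true]
  constructor
  · intro B N J _
    simp only [SN_sub_sq, integral_div, hY]
    have hfar : ∀ k, m < supNormZ k →
        ∫ ω, centeredTail X J (X 0 ω) * centeredTail X J (X k ω) = 0 := fun k hk => by
      simpa only [mul_comm] using hmdep.integral_comp_mul_comp_eq_zero hXm
        (measurable_centeredTail J) (hstat.integral_centeredTail hXi J) (a := k) (b := 0)
        (by simpa using hk)
    gcongr ?_ / _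
    rw [hb J, mul_comm]
    exact integral_sq_sum_le_of_covariance (fun n => memLp_centeredTail (hL2 n) J)
      (hstat.integral_comp_mul_comp_eq hXm (measurable_centeredTail J)) hfar _
  · refine squeeze_zero (fun J => by rw [hb J]; positivity) (fun J => ?_)
      (by simpa using (tendsto_integral_tailPart_sq (hL2 0)).const_mul (#(intCube d m) : ℝ))
    rw [hb J, ← nsmul_eq_mul, ← sum_const]
    exact sum_le_sum fun k _ => (hstat.abs_integral_comp_mul_comp_le hXm
      (measurable_centeredTail J) (fun n => memLp_centeredTail (hL2 n) J) k).trans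
      (integral_centeredTail_sq_le (hXm 0) J)

/-- **`L²` truncation bound for `m`-dependent stationary fields.** -/
theorem mdep_truncation_L2_bound
    {Ω : Type*} [MeasureSpace Ω] [IsProbabilityMeasure (ℙ : Measure Ω)]
    {d : ℕ} (m : ℕ) (X : (Fin d → ℤ) → Ω → ℝ)
    (hmeas : ∀ n, Measurable (X n))
    (hstat : StrictStat X)
    (hcent : ∀ n, ∫ ω, X n ω = 0)
    (hL2 : ∀ n, MemLp (X n) 2 ℙ)
    (hmdep : MDep m X)
    (b : ℝ → ℝ)
    (hbdef : ∀ J : ℝ, b J = ∑ k ∈ intCube d m,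
      |∫ ω, (X 0 ω - truncF X J 0 ω) * (X k ω - truncF X J k ω)|) :
    (∀ (B : Set (Fin d → ℤ)) (N : ℕ) (J : ℝ), 0 < J →
      ∫ ω, (SN d N B X ω - SN d N B (truncF X J) ω) ^ 2
        ≤ b J * (restr d B N).card / (2 * N + 1 : ℝ) ^ d) ∧
    Tendsto b atTop (nhds 0) :=
  mdep_truncation_L2_bound_general m X hstat hcent hL2 hmdep b hbdef
end
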